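/- For any paging request sequence r and any h, k > 0, the cost of an optimal offline paging strategy with h servers (cache size h) on r is at least (k - h + m(k,r)) · L(k,r) / 2, where L(k,r) is the number of k-phases minus 1 and m(k,r) is the average number of new requests per k-phase. -/

import Mathlib

/-!
Phases `j` and `j + 1` together request `k + mⱼ` distinct items, and each of them that is not
cached when phase `j` starts is faulted on there. So a schedule with `h` servers faults at least
`k + mⱼ - h` times in these two phases, and at least `k + mⱼ` times between the start of `r` and the
end of phase `j + 1`, as the cache starts empty. The pairs `(j, j + 1)` with `j` of a fixed parity
occupy disjoint windows; telescoping over each parity, with the first pair measured from the start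
of `r`, gives `∑ⱼ (k + mⱼ - h) ≤ 2 (faults - h)`.
-/

/-- Length of the maximal prefix of `r` containing at most `k` distinct items. -/
def maxPrefixLen {α : Type*} [DecidableEq α] (k : ℕ) (r : List α) : ℕ :=
  ((List.range (r.length + 1)).filter (fun n => (r.take n).dedup.length ≤ k)).foldr max 0

/-- Greedy phase partition, with fuel for termination. -/
def phasesAux {α : Type*} [DecidableEq α] (k : ℕ) : ℕ → List α → List (List α)
  | 0, _ => []
  | _, [] => []
  | (fuel+1), r =>
      let n := max 1 (maxPrefixLen k r)
      r.take n :: phasesAux k fuel (r.drop n)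

/-- The `k`-phase partition of `r`: greedy maximal consecutive blocks, each
containing requests to at most `k` distinct items. -/
def phases {α : Type*} [DecidableEq α] (k : ℕ) (r : List α) : List (List α) :=
  phasesAux k r.length r

/-- `L(k,r)`: the number of `k`-phases of `r`, minus 1. -/
def numPhases {α : Type*} [DecidableEq α] (k : ℕ) (r : List α) : ℕ :=
  (phases k r).length - 1

/-- For each `k`-phase other than the first, the number of new requests:
items requested in the phase but not in the previous phase. -/
def newCounts {α : Type*} [DecidableEq α] (k : ℕ) (r : List α) : List ℕ :=
  ((phases k r).zip (phases k r).tail).map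
    (fun p => (p.2.dedup.filter (fun x => x ∉ p.1)).length)

/-- `m(k,r)`: the average number of new requests per `k`-phase (other than the first). -/
noncomputable def avgNew {α : Type*} [DecidableEq α] (k : ℕ) (r : List α) : ℝ :=
  ((newCounts k r).sum : ℝ) / (numPhases k r : ℝ)

/-- Index in `r` at which the `i`-th `k`-phase starts. -/
def phaseStart {α : Type*} [DecidableEq α] (k : ℕ) (r : List α) (i : ℕ) : ℕ :=
  (((phases k r).take i).map List.length).sum

/-- An execution of a paging strategy with `h` servers (cache slots) on request
sequence `r`.  `cache i` is the set of items with a server just before request `i`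
is served; the cache starts empty, never exceeds `h` items, contains each
requested item right after it is served, and only requested items may enter. -/
structure PagingSchedule {α : Type*} [DecidableEq α] (h : ℕ) (r : List α) where
  cache : ℕ → Finset α
  init : cache 0 = ∅
  card_le : ∀ i, (cache i).card ≤ h
  serves : ∀ i : Fin r.length, r.get i ∈ cache (i.val + 1)
  update : ∀ i : Fin r.length, cache (i.val + 1) ⊆ cache i.val ∪ {r.get i}

/-- Number of faults: requests to items not currently in the cache. -/
def faults {α : Type*} [DecidableEq α] {h : ℕ} {r : List α} (s : PagingSchedule h r) : ℕ :=
  (Finset.univ.filter (fun i : Fin r.length => r.get i ∉ s.cache i.val)).card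

/-- Cost of a schedule: each server's first placement is free, so the number of
(paid) server movements is the number of faults minus `h`. -/
def schedCost {α : Type*} [DecidableEq α] {h : ℕ} {r : List α} (s : PagingSchedule h r) : ℕ :=
  faults s - h

/-- Optimal offline paging cost with `h` servers on `r`. -/
noncomputable def costOpt {α : Type*} [DecidableEq α] (h : ℕ) (r : List α) : ℕ :=
  sInf {c | ∃ s : PagingSchedule h r, c = schedCost s}

/-- Number of faults incurred at requests with index in `[a, b)`. -/
def windowFaults {α : Type*} [DecidableEq α] {h : ℕ} {r : List α}
    (s : PagingSchedule h r) (a b : ℕ) : ℕ :=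
  (Finset.univ.filter
    (fun i : Fin r.length => a ≤ i.val ∧ i.val < b ∧ r.get i ∉ s.cache i.val)).card

/-- A schedule is conservative if it faults at most `h` times during any
consecutive subsequence of requests to at most `h` distinct items. -/
def Conservative {α : Type*} [DecidableEq α] {h : ℕ} {r : List α}
    (s : PagingSchedule h r) : Prop :=
  ∀ a b : ℕ, ((r.drop a).take (b - a)).dedup.length ≤ h → windowFaults s a b ≤ h

namespace List

variable {α : Type*} [DecidableEq α]

theorem length_dedup_take_add_one_le (l : List α) (n : ℕ) :
    (l.take (n + 1)).dedup.length ≤ (l.take n).dedup.length + 1 := by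
  rw [← card_toFinset, ← card_toFinset, take_add_one, toFinset_append]
  refine (Finset.card_union_le _ _).trans (Nat.add_le_add_left ?_ _)
  cases l[n]? <;> simp

theorem length_dedup_append (p q : List α) :
    (p ++ q).dedup.length = p.dedup.length + (q.dedup.filter (· ∉ p)).length := by
  rw [← toFinset_card_of_nodup (q.nodup_dedup.filter _), ← card_toFinset, ← card_toFinset,
    toFinset_append, Finset.union_comm, ← Finset.card_sdiff_add_card, add_comm]
  congr 2
  ext x
  simp

end List

section Paging

variable {α : Type*} [DecidableEq α]

section MaxPrefixLen

theorem maxPrefixLen_mem (k : ℕ) (r : List α) :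
    maxPrefixLen k r ∈
      (List.range (r.length + 1)).filter (fun n => (r.take n).dedup.length ≤ k) := by
  have hne : (List.range (r.length + 1)).filter
      (fun n => (r.take n).dedup.length ≤ k) ≠ [] :=
    List.ne_nil_of_mem (a := 0) (by simp)
  exact List.maximum_mem (List.foldr_max_of_ne_nil hne).symm

theorem length_dedup_take_maxPrefixLen_le (k : ℕ) (r : List α) :
    (r.take (maxPrefixLen k r)).dedup.length ≤ k := by
  simpa using (List.mem_filter.mp (maxPrefixLen_mem k r)).2

theorem le_maxPrefixLen {k n : ℕ} {r : List α} (hn : n ≤ r.length)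
    (hd : (r.take n).dedup.length ≤ k) : n ≤ maxPrefixLen k r :=
  List.le_max_of_le (List.mem_filter.mpr ⟨List.mem_range.mpr (by omega), by simpa using hd⟩)
    le_rfl

theorem maxPrefixLen_pos {k : ℕ} (hk : 0 < k) {r : List α} (hr : r ≠ []) :
    0 < maxPrefixLen k r := by
  obtain ⟨a, t, rfl⟩ := List.exists_cons_of_ne_nil hr
  exact le_maxPrefixLen (by simp) (by simpa using Nat.succ_le_of_lt hk)

/-- A prefix that stops short of `r` is maximal, so one more request would exceed `k` items. -/
theorem length_dedup_take_maxPrefixLen {k : ℕ} {r : List α} (hlt : maxPrefixLen k r < r.length) :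
    (r.take (maxPrefixLen k r)).dedup.length = k := by
  have hnext : k < (r.take (maxPrefixLen k r + 1)).dedup.length := by
    by_contra! hle
    have := le_maxPrefixLen hlt hle
    omega
  have := List.length_dedup_take_add_one_le r (maxPrefixLen k r)
  have := length_dedup_take_maxPrefixLen_le k r
  omega

end MaxPrefixLen

section Phases

theorem phasesAux_cons (k fuel : ℕ) (a : α) (t : List α) :
    phasesAux k (fuel + 1) (a :: t) =
      (a :: t).take (max 1 (maxPrefixLen k (a :: t))) ::
        phasesAux k fuel ((a :: t).drop (max 1 (maxPrefixLen k (a :: t)))) := rfl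

theorem phasesAux_nil (k fuel : ℕ) : phasesAux k fuel ([] : List α) = [] := by
  cases fuel <;> rfl

theorem flatten_phasesAux (k : ℕ) :
    ∀ (fuel : ℕ) (r : List α), r.length ≤ fuel → (phasesAux k fuel r).flatten = r
  | 0, [], _ => rfl
  | _, [], _ => by rw [phasesAux_nil]; rfl
  | fuel + 1, a :: t, hr => by
    rw [phasesAux_cons, List.flatten_cons, flatten_phasesAux k fuel _ (by simp at hr ⊢; omega),
      List.take_append_drop]

theorem length_dedup_getElem_phasesAux {k : ℕ} (hk : 0 < k) :
    ∀ (fuel : ℕ) (r : List α) (j : ℕ) (hj : j + 1 < (phasesAux k fuel r).length),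
      ((phasesAux k fuel r)[j]).dedup.length = k
  | 0, r, j, hj => by simp [phasesAux] at hj
  | _ + 1, [], j, hj => by simp [phasesAux] at hj
  | fuel + 1, a :: t, 0, hj => by
    have hdrop : (a :: t).drop (max 1 (maxPrefixLen k (a :: t))) ≠ [] := by
      intro h
      simp [phasesAux_cons, h, phasesAux_nil] at hj
    have hmax : max 1 (maxPrefixLen k (a :: t)) = maxPrefixLen k (a :: t) :=
      max_eq_right (maxPrefixLen_pos hk (List.cons_ne_nil a t))
    rw [hmax] at hdrop
    simp only [phasesAux_cons, List.getElem_cons_zero, hmax]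
    exact length_dedup_take_maxPrefixLen (by simpa using hdrop)
  | fuel + 1, a :: t, j + 1, hj => by
    simp only [phasesAux_cons, List.length_cons, List.getElem_cons_succ] at hj ⊢
    exact length_dedup_getElem_phasesAux hk fuel _ j (by omega)

theorem flatten_phases (k : ℕ) (r : List α) : (phases k r).flatten = r :=
  flatten_phasesAux k r.length r le_rfl

theorem length_dedup_getElem_phases {k : ℕ} (hk : 0 < k) (r : List α) {j : ℕ}
    (hj : j + 1 < (phases k r).length) : ((phases k r)[j]).dedup.length = k :=
  length_dedup_getElem_phasesAux hk r.length r j hj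

end Phases

section PhaseWindows

theorem phaseStart_eq_length_flatten (k : ℕ) (r : List α) (i : ℕ) :
    phaseStart k r i = ((phases k r).take i).flatten.length := by
  rw [phaseStart, List.length_flatten]

theorem drop_phases_eq_cons_cons (k : ℕ) (r : List α) {j : ℕ}
    (hj : j + 1 < (phases k r).length) :
    (phases k r).drop j = (phases k r)[j] :: (phases k r)[j + 1] :: (phases k r).drop (j + 2) := by
  rw [List.drop_eq_getElem_cons (by omega), List.drop_eq_getElem_cons hj]

theorem phaseStart_add_two (k : ℕ) (r : List α) {j : ℕ} (hj : j + 1 < (phases k r).length) :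
    phaseStart k r (j + 2) =
      phaseStart k r j + ((phases k r)[j] ++ (phases k r)[j + 1]).length := by
  rw [phaseStart_eq_length_flatten, phaseStart_eq_length_flatten, List.take_add,
    drop_phases_eq_cons_cons k r hj]
  simp only [List.take_succ_cons, List.take_zero, List.flatten_append, List.flatten_cons,
    List.flatten_nil, List.length_append, List.length_nil, add_zero]

theorem drop_phaseStart (k : ℕ) (r : List α) (j : ℕ) :
    r.drop (phaseStart k r j) = ((phases k r).drop j).flatten := by
  have h : ((phases k r).take j ++ (phases k r).drop j).flatten.drop (phaseStart k r j) =
      ((phases k r).drop j).flatten := by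
    rw [List.flatten_append, phaseStart_eq_length_flatten, List.drop_left]
  rwa [List.take_append_drop, flatten_phases] at h

theorem window_phaseStart (k : ℕ) (r : List α) {j : ℕ} (hj : j + 1 < (phases k r).length) :
    (r.drop (phaseStart k r j)).take (phaseStart k r (j + 2) - phaseStart k r j) =
      (phases k r)[j] ++ (phases k r)[j + 1] := by
  rw [drop_phaseStart, drop_phases_eq_cons_cons k r hj, phaseStart_add_two k r hj,
    Nat.add_sub_cancel_left, List.flatten_cons, List.flatten_cons, ← List.append_assoc,
    List.take_left]

theorem length_newCounts (k : ℕ) (r : List α) : (newCounts k r).length = numPhases k r := by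
  simp only [newCounts, numPhases, List.length_map, List.length_zip, List.length_tail]
  omega

theorem add_one_lt_length_phases {k : ℕ} {r : List α} {j : ℕ}
    (hj : j < (newCounts k r).length) :
    j + 1 < (phases k r).length := by
  rw [length_newCounts, numPhases] at hj
  omega

theorem length_dedup_window_phaseStart {k : ℕ} (hk : 0 < k) (r : List α) {j : ℕ}
    (hj : j < (newCounts k r).length) :
    ((r.drop (phaseStart k r j)).take (phaseStart k r (j + 2) - phaseStart k r j)).dedup.length =
      k + (newCounts k r)[j] := by
  have hj' := add_one_lt_length_phases hj
  rw [window_phaseStart k r hj', List.length_dedup_append, length_dedup_getElem_phases hk r hj']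
  simp [newCounts]

end PhaseWindows

namespace PagingSchedule

variable {h : ℕ}

theorem nonempty_of_pos (hh : 0 < h) (r : List α) : Nonempty (PagingSchedule h r) :=
  ⟨{ cache := fun
        | 0 => ∅
        | i + 1 => r[i]?.toFinset
     init := rfl
     card_le := fun
        | 0 => by simp
        | i + 1 => (Option.card_toFinset _).trans_le <| by
            cases r[i]? <;> simp [Nat.one_le_iff_ne_zero, hh.ne']
     serves := fun i => by simp
     update := fun i => by simp }⟩

theorem exists_schedCost_eq_costOpt (hh : 0 < h) (r : List α) :
    ∃ s : PagingSchedule h r, schedCost s = costOpt h r := by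
  obtain ⟨s, hs⟩ : costOpt h r ∈ {c | ∃ s : PagingSchedule h r, c = schedCost s} :=
    Nat.sInf_mem (let ⟨s⟩ := nonempty_of_pos hh r; ⟨_, s, rfl⟩)
  exact ⟨s, hs.symm⟩

variable {r : List α} (s : PagingSchedule h r)

theorem windowFaults_le_faults (a b : ℕ) : windowFaults s a b ≤ faults s :=
  Finset.card_le_card fun i hi => by
    simp only [Finset.mem_filter, Finset.mem_univ, true_and] at hi ⊢
    exact hi.2.2

theorem windowFaults_add {a b c : ℕ} (hab : a ≤ b) (hbc : b ≤ c) :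
    windowFaults s a b + windowFaults s b c = windowFaults s a c := by
  unfold windowFaults
  rw [← Finset.card_union_of_disjoint]
  · congr 1
    ext i
    simp only [Finset.mem_union, Finset.mem_filter, Finset.mem_univ, true_and]
    constructor
    · rintro (⟨h1, h2, h3⟩ | ⟨h1, h2, h3⟩) <;> exact ⟨by omega, by omega, h3⟩
    · rintro ⟨h1, h2, h3⟩
      by_cases hib : i.val < b
      · exact Or.inl ⟨h1, hib, h3⟩
      · exact Or.inr ⟨by omega, h2, h3⟩
  · rw [Finset.disjoint_filter]
    intro i _ h1 h2
    omega

def faultedItems (a b : ℕ) : Finset α :=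
  (Finset.univ.filter
    (fun i : Fin r.length => a ≤ i.val ∧ i.val < b ∧ r.get i ∉ s.cache i.val)).image r.get

theorem faultedItems_mono (a : ℕ) {b c : ℕ} (hbc : b ≤ c) :
    s.faultedItems a b ⊆ s.faultedItems a c :=
  Finset.image_subset_image fun i hi => by
    simp only [Finset.mem_filter, Finset.mem_univ, true_and] at hi ⊢
    exact ⟨hi.1, by omega, hi.2.2⟩

/-- An item enters the cache only when it is requested, and a request to an item outside the
cache is a fault. -/
theorem subset_cache_union_faultedItems (a : ℕ) : ∀ b, a ≤ b →
    ((r.drop a).take (b - a)).toFinset ⊆ s.cache a ∪ s.faultedItems a b ∧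
      (b ≤ r.length → s.cache b ⊆ s.cache a ∪ s.faultedItems a b) := by
  refine Nat.le_induction (by simp) fun b hab ih => ?_
  have hmono : s.cache a ∪ s.faultedItems a b ⊆ s.cache a ∪ s.faultedItems a (b + 1) :=
    Finset.union_subset_union_right (s.faultedItems_mono a b.le_succ)
  by_cases hb : b < r.length
  · have htake : (r.drop a).take (b + 1 - a) = (r.drop a).take (b - a) ++ [r[b]] := by
      rw [Nat.sub_add_comm hab, List.take_add_one, List.getElem?_drop, Nat.add_sub_cancel' hab,
        List.getElem?_eq_getElem hb, Option.toList_some]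
    have hnew : r[b] ∈ s.cache a ∪ s.faultedItems a (b + 1) := by
      by_cases hc : r[b] ∈ s.cache b
      · exact hmono (ih.2 hb.le hc)
      · refine Finset.mem_union_right _ (Finset.mem_image.mpr ⟨⟨b, hb⟩, ?_, rfl⟩)
        simpa [hab] using hc
    refine ⟨?_, fun _ => (s.update ⟨b, hb⟩).trans ?_⟩
    · rw [htake, List.toFinset_append]
      exact Finset.union_subset (ih.1.trans hmono) (by simpa using hnew)
    · exact Finset.union_subset ((ih.2 hb.le).trans hmono) (by simpa using hnew)
  · have htake : (r.drop a).take (b + 1 - a) = (r.drop a).take (b - a) := by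
      rw [List.take_of_length_le (by simp; omega), List.take_of_length_le (by simp; omega)]
    exact ⟨htake ▸ ih.1.trans hmono, fun _ => by omega⟩

theorem length_dedup_window_le (a b : ℕ) :
    ((r.drop a).take (b - a)).dedup.length ≤ windowFaults s a b + (s.cache a).card := by
  rcases le_or_gt a b with hab | hba
  · rw [← List.card_toFinset, add_comm]
    calc _ ≤ (s.cache a ∪ s.faultedItems a b).card :=
          Finset.card_le_card (s.subset_cache_union_faultedItems a b hab).1
      _ ≤ _ := (Finset.card_union_le _ _).trans (Nat.add_le_add_left Finset.card_image_le _)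
  · simp [Nat.sub_eq_zero_of_le hba.le]

theorem length_dedup_window_le_windowFaults_zero (a b : ℕ) :
    ((r.drop a).take (b - a)).dedup.length ≤ windowFaults s 0 b := by
  calc _ ≤ (r.take b).dedup.length := by
        rw [← List.drop_take, ← List.card_toFinset, ← List.card_toFinset]
        exact Finset.card_le_card fun x hx =>
          List.mem_toFinset.2 (List.mem_of_mem_drop (List.mem_toFinset.1 hx))
    _ ≤ windowFaults s 0 b := by simpa [s.init] using s.length_dedup_window_le 0 b

end PagingSchedule

section LowerBound

variable {h k : ℕ} {r : List α}

theorem add_newCounts_le_windowFaults (hk : 0 < k) (s : PagingSchedule h r) {j : ℕ}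
    (hj : j < (newCounts k r).length) :
    k + (newCounts k r)[j] ≤ windowFaults s 0 (phaseStart k r (j + 2)) :=
  length_dedup_window_phaseStart hk r hj ▸ s.length_dedup_window_le_windowFaults_zero _ _

theorem add_newCounts_add_windowFaults_le (hk : 0 < k) (s : PagingSchedule h r) {j : ℕ}
    (hj : j < (newCounts k r).length) :
    k + (newCounts k r)[j] + windowFaults s 0 (phaseStart k r j) ≤
      windowFaults s 0 (phaseStart k r (j + 2)) + h := by
  have hwindow := s.length_dedup_window_le (phaseStart k r j) (phaseStart k r (j + 2))
  rw [length_dedup_window_phaseStart hk r hj] at hwindow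
  have hle : phaseStart k r j ≤ phaseStart k r (j + 2) := by
    rw [phaseStart_add_two k r (add_one_lt_length_phases hj)]
    omega
  have hsplit := s.windowFaults_add (Nat.zero_le _) hle
  have := s.card_le (phaseStart k r j)
  omega

theorem sum_take_newCounts_le (hk : 0 < k) (s : PagingSchedule h r) :
    ∀ n, n + 2 ≤ (newCounts k r).length →
      k * (n + 2) + ((newCounts k r).take (n + 2)).sum + 2 * h ≤
        windowFaults s 0 (phaseStart k r (n + 2)) + windowFaults s 0 (phaseStart k r (n + 3)) +
          (n + 2) * h
  | 0, hn => by
    have h0 := add_newCounts_le_windowFaults hk s (j := 0) (by omega)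
    have h1 := add_newCounts_le_windowFaults hk s (j := 1) (by omega)
    rw [List.sum_take_succ _ _ (by omega), List.sum_take_succ _ _ (by omega)]
    simp only [List.take_zero, List.sum_nil, Nat.reduceAdd] at h0 h1 ⊢
    omega
  | n + 1, hn => by
    have ih := sum_take_newCounts_le hk s n (by omega)
    have hstep := add_newCounts_add_windowFaults_le hk s (j := n + 2) (by omega)
    rw [List.sum_take_succ _ _ (by omega)]
    simp only [add_assoc, Nat.reduceAdd] at ih hstep ⊢
    have hk_mul : k * (n + 3) = k * (n + 2) + k := by ring
    have hh_mul : (n + 3) * h = (n + 2) * h + h := by ring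
    omega

theorem k_mul_numPhases_add_sum_newCounts_le (hk : 0 < k) (s : PagingSchedule h r) :
    k * numPhases k r + (newCounts k r).sum ≤ 2 * schedCost s + numPhases k r * h := by
  have hfaults := s.windowFaults_le_faults 0
  have hcost : faults s ≤ schedCost s + h := le_tsub_add
  rw [← length_newCounts]
  match hL : (newCounts k r).length with
  | 0 => simp_all
  | 1 =>
    have h0 := add_newCounts_le_windowFaults hk s (j := 0) (by omega)
    rw [← List.take_of_length_le hL.le, List.sum_take_succ _ _ (by omega)]
    simp only [List.take_zero, List.sum_nil, Nat.reduceAdd] at h0 ⊢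
    have := hfaults (phaseStart k r 2)
    omega
  | n + 2 =>
    have hsum := sum_take_newCounts_le hk s n (by omega)
    rw [List.take_of_length_le hL.le] at hsum
    have := hfaults (phaseStart k r (n + 2))
    have := hfaults (phaseStart k r (n + 3))
    omega

theorem le_schedCost (hk : 0 < k) (s : PagingSchedule h r) :
    ((k : ℝ) - h + avgNew k r) * numPhases k r / 2 ≤ schedCost s := by
  have key : ((k * numPhases k r + (newCounts k r).sum : ℕ) : ℝ) ≤
      ((2 * schedCost s + numPhases k r * h : ℕ) : ℝ) := by
    exact_mod_cast k_mul_numPhases_add_sum_newCounts_le hk s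
  simp only [Nat.cast_add, Nat.cast_mul, Nat.cast_ofNat] at key
  rcases eq_or_ne (numPhases k r : ℝ) 0 with hL | hL
  · simp [hL]
  · have : ((k : ℝ) - h + avgNew k r) * numPhases k r =
        k * numPhases k r + (newCounts k r).sum - numPhases k r * h := by
      rw [avgNew]
      field_simp
      ring
    linarith

end LowerBound

end Paging

/-- the optimal offline paging cost with `h` servers is at least
`(k - h + m(k,r)) · L(k,r) / 2`. -/
theorem costOpt_lower_bound {α : Type*} [DecidableEq α] (r : List α) (h k : ℕ)
    (hh : 0 < h) (hk : 0 < k) :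
    ((k : ℝ) - (h : ℝ) + avgNew k r) * (numPhases k r : ℝ) / 2 ≤ (costOpt h r : ℝ) := by
  obtain ⟨s, hs⟩ := PagingSchedule.exists_schedCost_eq_costOpt hh r
  exact hs ▸ le_schedCost hk s
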